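/- Let G be a finite simple graph with n vertices, none of them isolated. If G satisfies MSC, then for every integer k ≥ 1, every basic k-cover of G has norm kn/2 (i.e., twice the norm of every basic k-cover equals kn). -/

import Mathlib

variable {V : Type*} [Fintype V] [DecidableEq V]

/-- For `k ∈ ℕ`, a `k`-cover of `G` is a function from the vertices of `G` to `ℕ` that is
not identically zero and whose values at the two endpoints of any edge sum to at least `k`. -/
def IsCover (G : SimpleGraph V) (k : ℕ) (a : V → ℕ) : Prop :=
  a ≠ 0 ∧ ∀ i j : V, G.Adj i j → k ≤ a i + a j

/-- A `k`-cover is basic if it is not the pointwise sum of a `k`-cover and a `0`-cover. -/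
def IsBasicCover (G : SimpleGraph V) (k : ℕ) (a : V → ℕ) : Prop :=
  IsCover G k a ∧ ¬ ∃ b c : V → ℕ, IsCover G k b ∧ IsCover G 0 c ∧ a = b + c

/-- `G` is a domain if for all `s, t` with `s + t ≥ 1`, the pointwise sum of any `s` basic
`1`-covers and any `t` basic `2`-covers of `G` is a basic `(s + 2t)`-cover. -/
def IsGraphDomain (G : SimpleGraph V) : Prop :=
  ∀ s t : ℕ, 1 ≤ s + t → ∀ f : Fin s → V → ℕ, ∀ g : Fin t → V → ℕ,
    (∀ p, IsBasicCover G 1 (f p)) → (∀ q, IsBasicCover G 2 (g q)) →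
    IsBasicCover G (s + 2 * t) ((∑ p, f p) + (∑ q, g q))

/-- `G` is unmixed if all basic `1`-covers of `G` have the same norm. -/
def IsUnmixed (G : SimpleGraph V) : Prop :=
  ∀ a b : V → ℕ, IsBasicCover G 1 a → IsBasicCover G 1 b → ∑ v, a v = ∑ v, b v

/-- `G` satisfies WSC if it has at least one edge and every non-isolated vertex `i` has a
neighbour `j` such that any neighbour of `i` is adjacent to any neighbour of `j`. -/
def SatisfiesWSC (G : SimpleGraph V) : Prop :=
  (∃ i j : V, G.Adj i j) ∧
    ∀ i : V, (∃ x, G.Adj i x) →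
      ∃ j : V, G.Adj i j ∧ ∀ i' j' : V, G.Adj i i' → G.Adj j j' → G.Adj i' j'

/-- `G` satisfies SC if for every edge `{i, j}`, every neighbour `i'` of `i` and every
neighbour `j'` of `j`, one has `i' ≠ j'` and `{i', j'}` is an edge. -/
def SatisfiesSC (G : SimpleGraph V) : Prop :=
  ∀ i j i' j' : V, G.Adj i j → G.Adj i i' → G.Adj j j' → i' ≠ j' ∧ G.Adj i' j'

/-- `G` satisfies MSC if the set of non-isolated vertices of `G` is nonempty and carries a
perfect matching `M` (a matching of `G` whose vertex set is exactly the set of non-isolated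
vertices) such that for every edge `{i, j}` of `M`, every neighbour `i'` of `i` in `G` and
every neighbour `j'` of `j` in `G`, `{i', j'}` is an edge of `G`. -/
def SatisfiesMSC (G : SimpleGraph V) : Prop :=
  ∃ M : G.Subgraph, M.verts = {v : V | ∃ w, G.Adj v w} ∧ M.verts.Nonempty ∧
    M.IsMatching ∧
    ∀ i j : V, M.Adj i j → ∀ i' j' : V, G.Adj i i' → G.Adj j j' → G.Adj i' j'

/-- The graph `G^{0-1}`: its edges are the edges `{i, j}` of `G` such that `a i + a j = 1`
for every basic `1`-cover `a` of `G`.  (Its vertex set is interpreted as the set of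
non-isolated vertices of `G`; here it is defined on all of `V`, and the vertices of `G`
that are isolated stay isolated, so they can be excluded explicitly when needed.) -/
def ZeroOne (G : SimpleGraph V) : SimpleGraph V where
  Adj i j := G.Adj i j ∧ ∀ a : V → ℕ, IsBasicCover G 1 a → a i + a j = 1
  symm := by
    refine ⟨?_⟩
    intro i j h
    exact ⟨h.1.symm, fun a ha => by rw [add_comm]; exact h.2 a ha⟩
  loopless := by
    refine ⟨?_⟩
    intro i h
    exact G.irrefl h.1

/-- `A ∪ B` is a vertex bipartition of the connected component `C` of `H`, and the edges of
`H` inside `C` are exactly the pairs `{x, y}` with `x ∈ A` and `y ∈ B` (so the component is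
a complete bipartite graph on `A ∪ B`). -/
def IsCompBipartition (H : SimpleGraph V) (C : H.ConnectedComponent) (A B : Set V) : Prop :=
  A ∪ B = C.supp ∧ Disjoint A B ∧
    ∀ x ∈ C.supp, ∀ y ∈ C.supp,
      (H.Adj x y ↔ (x ∈ A ∧ y ∈ B) ∨ (x ∈ B ∧ y ∈ A))

/-- The graph `G⁺` obtained from `G` by attaching a pendant vertex to each vertex of `G`:
`Sum.inl v` is the original vertex `v`, and `Sum.inr v` is the pendant attached to `v`. -/
def GPlus (G : SimpleGraph V) : SimpleGraph (V ⊕ V) where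
  Adj x y :=
    match x, y with
    | Sum.inl u, Sum.inl v => G.Adj u v
    | Sum.inl u, Sum.inr v => u = v
    | Sum.inr u, Sum.inl v => u = v
    | Sum.inr _, Sum.inr _ => False
  symm := by
    refine ⟨?_⟩
    rintro (u | u) (v | v) h
    · exact h.symm
    · exact h.symm
    · exact h.symm
    · exact h.elim
  loopless := by
    refine ⟨?_⟩
    rintro (u | u) h
    · exact G.irrefl h
    · exact h

/-! If `a` is a basic `k`-cover, every vertex `v` with `a v > 0` has a neighbour `w` with
`a v + a w ≤ k`: otherwise lowering `a v` by one leaves a `k`-cover, splitting off a `0`-cover.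
Let `{i, j}` be an edge of the MSC matching. If `a i + a j > k`, both `i` and `j` have such
tight neighbours `i'` and `j'`, and MSC makes `{i', j'}` an edge, so
`2k < a i + a i' + a j + a j' ≤ 2k`. Hence `a` sums to `k` on every matching edge, and summing
over the perfect matching gives `2 |a| = k n`. -/

namespace SimpleGraph

theorem Subgraph.IsPerfectMatching.two_nsmul_sum_eq {W R : Type*} [Fintype W]
    [AddCommMonoid R] {G : SimpleGraph W} {M : G.Subgraph} (hM : M.IsPerfectMatching)
    {a : W → R} {k : R} (h : ∀ i j, M.Adj i j → a i + a j = k) :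
    2 • ∑ v, a v = Fintype.card W • k := by
  choose f hf using fun v => (isPerfectMatching_iff.mp hM v).exists
  have hinv : Function.Involutive f := fun v => hM.1.eq_of_adj_left (hf (f v)) (hf v).symm
  calc 2 • ∑ v, a v = ∑ v, a v + ∑ v, a (f v) := by rw [two_nsmul, hinv.bijective.sum_comp]
    _ = ∑ v, (a v + a (f v)) := Finset.sum_add_distrib.symm
    _ = ∑ _v : W, k := Finset.sum_congr rfl fun v _ => h v (f v) (hf v)
    _ = Fintype.card W • k := by rw [Finset.sum_const, Finset.card_univ]

end SimpleGraph

namespace IsBasicCover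

variable {W : Type*} {G : SimpleGraph W} {k : ℕ} {a : W → ℕ}

theorem exists_adj_add_le (ha : IsBasicCover G k a) (hk : 1 ≤ k) {v u : W} (hvu : G.Adj v u)
    (hv : 0 < a v) : ∃ w, G.Adj v w ∧ a v + a w ≤ k := by
  classical
  by_contra! hlt
  set b := Function.update a v (a v - 1)
  have hb : ∀ x y, G.Adj x y → k ≤ b x + b y := by
    intro x y hxy
    have hcov := ha.1.2 x y hxy
    rcases eq_or_ne x v with rfl | hx
    · have := hlt y hxy
      simp only [b, Function.update_self, Function.update_of_ne hxy.ne']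
      omega
    rcases eq_or_ne y v with rfl | hy
    · have := hlt x hxy.symm
      simp only [b, Function.update_self, Function.update_of_ne hx]
      omega
    simpa only [b, Function.update_of_ne hx, Function.update_of_ne hy] using hcov
  refine ha.2
    ⟨b, Pi.single v 1, ⟨fun h0 => ?_, hb⟩, ⟨fun h0 => ?_, fun _ _ _ => Nat.zero_le _⟩, ?_⟩
  · simpa [h0] using (hb v u hvu).trans_lt' hk
  · simpa using congrFun h0 v
  · funext x
    rcases eq_or_ne x v with rfl | hx
    · simp only [Pi.add_apply, b, Function.update_self, Pi.single_eq_same]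
      omega
    · simp [b, hx]

theorem add_eq_of_adj (ha : IsBasicCover G k a) (hk : 1 ≤ k) {i j : W} (hij : G.Adj i j)
    (hsc : ∀ i' j', G.Adj i i' → G.Adj j j' → G.Adj i' j') : a i + a j = k := by
  refine le_antisymm (not_lt.mp fun hgt => ?_) (ha.1.2 i j hij)
  rcases Nat.eq_zero_or_pos (a i) with hi | hi
  · obtain ⟨w, -, hw⟩ := ha.exists_adj_add_le hk hij.symm (by omega)
    omega
  rcases Nat.eq_zero_or_pos (a j) with hj | hj
  · obtain ⟨w, -, hw⟩ := ha.exists_adj_add_le hk hij hi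
    omega
  obtain ⟨i', hii', hi'⟩ := ha.exists_adj_add_le hk hij hi
  obtain ⟨j', hjj', hj'⟩ := ha.exists_adj_add_le hk hij.symm hj
  have := ha.1.2 i' j' (hsc i' j' hii' hjj')
  omega

end IsBasicCover

/-- If `G` has no isolated vertices and satisfies MSC, then for every `k ≥ 1`
every basic `k`-cover of `G` has norm `k * n / 2` (where `n` is the number of vertices),
i.e. twice its norm equals `k * n`. -/
theorem msc_basic_covers_norm (G : SimpleGraph V) (hiso : ∀ v : V, ∃ w, G.Adj v w)
    (hmsc : SatisfiesMSC G) :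
    ∀ k : ℕ, 1 ≤ k → ∀ a : V → ℕ, IsBasicCover G k a →
      2 * (∑ v, a v) = k * Fintype.card V := by
  obtain ⟨M, hverts, -, hmatch, hsc⟩ := hmsc
  have hM : M.IsPerfectMatching := ⟨hmatch, fun v => hverts ▸ hiso v⟩
  intro k hk a ha
  rw [mul_comm k, ← smul_eq_mul, ← smul_eq_mul]
  exact hM.two_nsmul_sum_eq fun i j hij => ha.add_eq_of_adj hk (M.adj_sub hij) (hsc i j hij)
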